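/- Let θ be a real antisymmetric n×n matrix with n > 2 whose strictly upper-triangular entries, together with 1, are linearly independent over ℚ. If σ: ℤⁿ → ℤⁿ is a group automorphism satisfying σ(x)·θσ(y) ≡ x·θy (mod ℤ) for all x,y ∈ ℤⁿ, then σ = Id or σ = −Id. -/
import Mathlib


open Matrix

/-- For `n > 2` and `θ` antisymmetric whose strictly upper-triangular entries together
with `1` are linearly independent over the rationals (equivalently over ℤ), any group
automorphism `σ` of `ℤⁿ` preserving the form `x·θy` modulo `ℤ` is `±Id`. -/
theorem flip_automorphism (n : ℕ) (hn : 2 < n) (θ : Matrix (Fin n) (Fin n) ℝ)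
    (hθ : θᵀ = -θ)
    (hindep : ∀ (c : Fin n → Fin n → ℤ) (c₀ : ℤ),
      (∑ i, ∑ j, if i < j then (c i j : ℝ) * θ i j else 0) + (c₀ : ℝ) = 0 →
      (∀ i j, i < j → c i j = 0) ∧ c₀ = 0)
    (σ : (Fin n → ℤ) ≃+ (Fin n → ℤ))
    (hσ : ∀ x y : Fin n → ℤ, ∃ m : ℤ,
      ((fun i => ((σ x) i : ℝ)) ⬝ᵥ θ.mulVec (fun i => ((σ y) i : ℝ)))
        - ((fun i => (x i : ℝ)) ⬝ᵥ θ.mulVec (fun i => (y i : ℝ))) = (m : ℝ)) :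
    (∀ x, σ x = x) ∨ (∀ x, σ x = -x) := by
  classical
  set A : Fin n → Fin n → ℤ := fun i k => σ (Pi.single k 1) i with hA
  have hAapp : ∀ (i k : Fin n), σ (Pi.single k 1) i = A i k := fun _ _ => rfl
  -- basic facts about θ
  have hθ' : ∀ i j, θ j i = - θ i j := by
    intro i j
    have := congrFun (congrFun hθ i) j
    simpa [Matrix.transpose_apply] using this
  have hθ0 : ∀ i, θ i i = 0 := by
    intro i
    have := hθ' i i; linarith
  -- dot product as double sum
  have dp : ∀ f g : Fin n → ℝ, f ⬝ᵥ θ.mulVec g = ∑ i, ∑ j, (f i * g j) * θ i j := by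
    intro f g
    simp only [dotProduct, mulVec, Finset.mul_sum]
    exact Finset.sum_congr rfl fun i _ => Finset.sum_congr rfl fun j _ => by ring
  -- restructure a double sum against θ into an upper-triangular sum
  have key : ∀ w : Fin n → Fin n → ℝ,
      ∑ i, ∑ j, w i j * θ i j
        = ∑ i, ∑ j, if i < j then (w i j - w j i) * θ i j else 0 := by
    intro w
    have h1 : ∀ i j : Fin n, w i j * θ i j =
        (if i < j then w i j * θ i j else 0) + (if j < i then w i j * θ i j else 0) := by
      intro i j
      rcases lt_trichotomy i j with h | h | h
      · simp [h, not_lt_of_gt h]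
      · simp [h, hθ0]
      · simp [h, not_lt_of_gt h]
    have h2 : (∑ i, ∑ j, w i j * θ i j)
        = (∑ i, ∑ j, if i < j then w i j * θ i j else 0)
          + (∑ i, ∑ j, if j < i then w i j * θ i j else 0) := by
      have hrow : ∀ i : Fin n, (∑ j, w i j * θ i j)
          = (∑ j, if i < j then w i j * θ i j else 0)
            + (∑ j, if j < i then w i j * θ i j else 0) := by
        intro i
        rw [← Finset.sum_add_distrib]
        exact Finset.sum_congr rfl fun j _ => h1 i j
      rw [← Finset.sum_add_distrib]
      exact Finset.sum_congr rfl fun i _ => hrow i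
    have h3 : (∑ i : Fin n, ∑ j : Fin n, if j < i then w i j * θ i j else 0)
        = ∑ i : Fin n, ∑ j : Fin n, if i < j then (- w j i) * θ i j else 0 := by
      rw [Finset.sum_comm]
      apply Finset.sum_congr rfl; intro i _
      apply Finset.sum_congr rfl; intro j _
      by_cases h : i < j
      · simp only [if_pos h, hθ' i j]; ring
      · simp [h]
    rw [h2, h3, ← Finset.sum_add_distrib]
    apply Finset.sum_congr rfl; intro i _
    rw [← Finset.sum_add_distrib]
    apply Finset.sum_congr rfl; intro j _
    by_cases h : i < j
    · simp only [if_pos h]; ring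
    · simp [h]
  -- the 2x2 minor identities
  have star0 : ∀ k l i j : Fin n, i < j →
      A i k * A j l - A j k * A i l
        = (if i = k then 1 else 0) * (if j = l then 1 else 0)
          - (if i = l then 1 else 0) * (if j = k then 1 else 0) := by
    intro k l
    obtain ⟨m, hm⟩ := hσ (Pi.single k 1) (Pi.single l 1)
    rw [dp, dp] at hm
    simp only [hAapp, Pi.single_apply] at hm
    have hm' : (∑ i, ∑ j,
        (((A i k : ℝ) * (A j l : ℝ)
          - ((if i = k then (1:ℤ) else 0) : ℝ) * ((if j = l then (1:ℤ) else 0) : ℝ)) * θ i j)) = m := by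
      rw [← hm, ← Finset.sum_sub_distrib]
      apply Finset.sum_congr rfl; intro i _
      rw [← Finset.sum_sub_distrib]
      apply Finset.sum_congr rfl; intro j _
      split_ifs <;> push_cast <;> ring
    rw [key] at hm'
    have hsum : (∑ i, ∑ j, if i < j then
        (((fun i j => A i k * A j l - A j k * A i l
          - (if i = k then 1 else 0) * (if j = l then 1 else 0)
          + (if i = l then 1 else 0) * (if j = k then 1 else 0)) : Fin n → Fin n → ℤ) i j : ℝ) * θ i j else 0)
        + ((-m : ℤ) : ℝ) = 0 := by
      have heq : (∑ i, ∑ j, if i < j then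
          (((fun i j => A i k * A j l - A j k * A i l
            - (if i = k then 1 else 0) * (if j = l then 1 else 0)
            + (if i = l then 1 else 0) * (if j = k then 1 else 0)) : Fin n → Fin n → ℤ) i j : ℝ) * θ i j else 0)
          = (m : ℝ) := by
        rw [← hm']
        apply Finset.sum_congr rfl; intro i _
        apply Finset.sum_congr rfl; intro j _
        by_cases h : i < j
        · simp only [if_pos h]
          congr 1
          split_ifs <;> push_cast <;> ring
        · simp [h]
      rw [heq]; push_cast; ring
    have h0 := (hindep _ _ hsum).1
    intro i j hij
    have := h0 i j hij
    linarith [this]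
  -- extend to all i j (i ≠ j)
  have star : ∀ k l i j : Fin n, i ≠ j →
      A i k * A j l - A j k * A i l
        = (if i = k then 1 else 0) * (if j = l then 1 else 0)
          - (if i = l then 1 else 0) * (if j = k then 1 else 0) := by
    intro k l i j hij
    rcases lt_or_gt_of_ne hij with h | h
    · exact star0 k l i j h
    · have := star0 k l j i h
      linarith [this]
  -- existence of a third index
  have hex : ∀ i p : Fin n, ∃ q : Fin n, q ≠ i ∧ q ≠ p := by
    intro i p
    by_contra h
    push_neg at h
    have hsub : (Finset.univ : Finset (Fin n)) ⊆ {i, p} := by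
      intro q _
      simp only [Finset.mem_insert, Finset.mem_singleton]
      rcases eq_or_ne q i with h' | h'
      · exact Or.inl h'
      · exact Or.inr (h q h')
    have hcard := Finset.card_le_card hsub
    have h2 : ({i, p} : Finset (Fin n)).card ≤ 2 := by
      apply le_trans (Finset.card_insert_le _ _); simp
    simp only [Finset.card_univ, Fintype.card_fin] at hcard
    omega
  -- off-diagonal entries vanish
  have offdiag : ∀ p i : Fin n, p ≠ i → A p i = 0 := by
    intro p i hpi
    obtain ⟨q, hqi, hqp⟩ := hex i p
    have hE1 := star i q p q (Ne.symm hqp)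
    have hE2 := star i q i p (Ne.symm hpi)
    have hE3 := star i q i q (Ne.symm hqi)
    simp [hpi, hqi, hqp, Ne.symm hpi, Ne.symm hqi, Ne.symm hqp] at hE1 hE2 hE3
    have hE1' : A p i * A q q - A q i * A p q = 0 := by linarith [hE1]
    have hE2' : A i i * A p q - A p i * A i q = 0 := by linarith [hE2]
    have hE3' : A i i * A q q - A q i * A i q = 1 := by linarith [hE3]
    linear_combination (-(A p i)) * hE3' + (A i i) * hE1' + (A q i) * hE2'
  -- diagonal entries multiply to 1
  have diag : ∀ i j : Fin n, i ≠ j → A i i * A j j = 1 := by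
    intro i j hij
    have hE := star i j i j hij
    simp [hij, Ne.symm hij] at hE
    have h0 : A j i = 0 := offdiag j i (Ne.symm hij)
    have h1 : A i j = 0 := offdiag i j hij
    rw [h0, h1] at hE
    linarith [hE]
  -- σ acts by the matrix A
  have hσx : ∀ (x : Fin n → ℤ) (p : Fin n), σ x p = ∑ k, x k * A p k := by
    intro x p
    have hx : x = ∑ k, x k • Pi.single k (1 : ℤ) := by
      funext q
      simp [Finset.sum_apply, Pi.single_apply]
    have h2 : σ x = ∑ k, x k • σ (Pi.single k (1 : ℤ)) := by
      conv_lhs => rw [hx]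
      rw [map_sum]
      exact Finset.sum_congr rfl fun k _ => map_zsmul σ _ _
    rw [h2, Finset.sum_apply]
    refine Finset.sum_congr rfl fun k _ => ?_
    simp [hAapp, smul_eq_mul]
  -- conclude
  have hij0 : (⟨0, by omega⟩ : Fin n) ≠ (⟨1, by omega⟩ : Fin n) := by
    simp [Fin.ext_iff]
  have hd0 := diag ⟨0, by omega⟩ ⟨1, by omega⟩ hij0
  rcases Int.mul_eq_one_iff_eq_one_or_neg_one.mp hd0 with ⟨h1, -⟩ | ⟨h1, -⟩
  · left
    have hdiag1 : ∀ i, A i i = 1 := by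
      intro i
      rcases eq_or_ne i (⟨0, by omega⟩ : Fin n) with rfl | hne
      · exact h1
      · have := diag (⟨0, by omega⟩ : Fin n) i (Ne.symm hne)
        rw [h1] at this; linarith
    intro x
    funext p
    rw [hσx, Finset.sum_eq_single p]
    · rw [hdiag1]; ring
    · intro k _ hk
      rw [offdiag p k (Ne.symm hk)]; ring
    · intro h; exact absurd (Finset.mem_univ p) h
  · right
    have hdiag1 : ∀ i, A i i = -1 := by
      intro i
      rcases eq_or_ne i (⟨0, by omega⟩ : Fin n) with rfl | hne
      · exact h1
      · have := diag (⟨0, by omega⟩ : Fin n) i (Ne.symm hne)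
        rw [h1] at this; linarith
    intro x
    funext p
    rw [hσx, Finset.sum_eq_single p]
    · rw [hdiag1]; simp
    · intro k _ hk
      rw [offdiag p k (Ne.symm hk)]; ring
    · intro h; exact absurd (Finset.mem_univ p) h
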